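/- arXiv:1505.03232 — 4 statements merged into one kernel-verified Lean document; each statement's English description precedes it below -/
import Mathlib

section
/- Let 0 < R₁ < r, d ∈ ℝ, and (x,y) ∈ ℝ² with x² + y² = r². Define the symmetric matrix C by C₁₁ = ((r-R₁)/r)(x²/r²) + (1/(r(r-R₁)))(dx/r - y)², C₂₂ = ((r-R₁)/r)(y²/r²) + (1/(r(r-R₁)))(dy/r + x)², C₁₂ = ((r-R₁)/r)(xy/r²) + (1/(r(r-R₁)))(dx/r - y)(dy/r + x). Then C is symmetric positive definite, det C = 1, and C₁₁ + C₂₂ = (r - R₁)/r + (r² + d²)/(r(r - R₁)). -/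
/-!
Writing `u = (x, y)/r` and `w = (d x/r - y, d y/r + x)`, the matrix is
`C = ((r-R₁)/r) u uᵀ + (1/(r(r-R₁))) w wᵀ`, a positive combination of two rank-one
positive semidefinite matrices. Its determinant is the product of the two weights times the
squared cross product `u × w = (x² + y²)/r = r`, which is `1`; in particular `C` is invertible,
hence positive definite. Its trace is `((r-R₁)/r) |u|² + (1/(r(r-R₁))) |w|²` with `|u|² = 1`
and `|w|² = r² + d²`.
-/

open Matrix

theorem Matrix.det_fin_two_smul_vecMulVec_add_smul_vecMulVec {R : Type*} [CommRing R]
    (a b : R) (u w : Fin 2 → R) :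
    (a • vecMulVec u u + b • vecMulVec w w).det = a * b * (u 0 * w 1 - u 1 * w 0) ^ 2 := by
  rw [det_fin_two]
  simp only [Matrix.add_apply, Matrix.smul_apply, vecMulVec_apply, smul_eq_mul]
  ring

theorem Matrix.trace_smul_vecMulVec_add_smul_vecMulVec {n R : Type*} [Fintype n] [CommRing R]
    (a b : R) (u w : n → R) :
    (a • vecMulVec u u + b • vecMulVec w w).trace = a * (u ⬝ᵥ u) + b * (w ⬝ᵥ w) := by
  simp

theorem Matrix.posSemidef_smul_vecMulVec_add_smul_vecMulVec {n : Type*} [Fintype n]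
    {a b : ℝ} (ha : 0 ≤ a) (hb : 0 ≤ b) (u w : n → ℝ) :
    (a • vecMulVec u u + b • vecMulVec w w).PosSemidef := by
  have hvec (v : n → ℝ) : (vecMulVec v v).PosSemidef := by
    simpa using posSemidef_vecMulVec_self_star v
  exact ((hvec u).smul ha).add ((hvec w).smul hb)

theorem Matrix.posDef_fin_two_smul_vecMulVec_add_smul_vecMulVec {a b : ℝ} (ha : 0 < a)
    (hb : 0 < b) {u w : Fin 2 → ℝ} (huw : u 0 * w 1 - u 1 * w 0 ≠ 0) :
    (a • vecMulVec u u + b • vecMulVec w w).PosDef := by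
  rw [(posSemidef_smul_vecMulVec_add_smul_vecMulVec ha.le hb.le u w).posDef_iff_det_ne_zero,
    det_fin_two_smul_vecMulVec_add_smul_vecMulVec]
  positivity

/-- the cloaking-layer material matrix of the polygonal cloak is
symmetric positive definite with `det C = 1` and trace
`(r-R₁)/r + (r²+d²)/(r(r-R₁))`. -/
theorem stmt12 (R₁ r d x y : ℝ) (hR₁ : 0 < R₁) (hr : R₁ < r)
    (hxy : x ^ 2 + y ^ 2 = r ^ 2)
    (C : Matrix (Fin 2) (Fin 2) ℝ)
    (hC : C = Matrix.of
      !![(r - R₁) / r * (x ^ 2 / r ^ 2) + 1 / (r * (r - R₁)) * (d * x / r - y) ^ 2,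
         (r - R₁) / r * (x * y / r ^ 2) +
           1 / (r * (r - R₁)) * ((d * x / r - y) * (d * y / r + x));
         (r - R₁) / r * (x * y / r ^ 2) +
           1 / (r * (r - R₁)) * ((d * x / r - y) * (d * y / r + x)),
         (r - R₁) / r * (y ^ 2 / r ^ 2) + 1 / (r * (r - R₁)) * (d * y / r + x) ^ 2]) :
    C.IsSymm ∧ C.PosDef ∧ C.det = 1 ∧
    C 0 0 + C 1 1 = (r - R₁) / r + (r ^ 2 + d ^ 2) / (r * (r - R₁)) := by
  have hr0 : 0 < r := hR₁.trans hr
  have hrR : 0 < r - R₁ := sub_pos.mpr hr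
  set u : Fin 2 → ℝ := ![x / r, y / r]
  set w : Fin 2 → ℝ := ![d * x / r - y, d * y / r + x]
  have hC_sum :
      C = ((r - R₁) / r) • vecMulVec u u + (1 / (r * (r - R₁))) • vecMulVec w w := by
    rw [hC, show ∀ M : Matrix (Fin 2) (Fin 2) ℝ, of M = M from fun _ ↦ rfl]
    ext i j
    fin_cases i <;> fin_cases j <;>
      simp only [u, w, Matrix.add_apply, Matrix.smul_apply, vecMulVec_apply, smul_eq_mul,
        of_apply, cons_val', cons_val_zero, cons_val_one, empty_val', cons_val_fin_one,
        Fin.zero_eta, Fin.mk_one] <;>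
      ring
  have hcross : u 0 * w 1 - u 1 * w 0 = r := by
    simp only [u, w, cons_val_zero, cons_val_one]
    field_simp
    linear_combination r * hxy
  have hPD : C.PosDef := hC_sum ▸ posDef_fin_two_smul_vecMulVec_add_smul_vecMulVec
    (div_pos hrR hr0) (by positivity) (hcross.trans_ne hr0.ne')
  refine ⟨hPD.isHermitian, hPD, ?_, ?_⟩
  · rw [hC_sum, det_fin_two_smul_vecMulVec_add_smul_vecMulVec, hcross]
    field_simp
  · rw [← trace_fin_two, hC_sum, trace_smul_vecMulVec_add_smul_vecMulVec]
    simp only [u, w, dotProduct, Fin.sum_univ_two, cons_val_zero, cons_val_one]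
    field_simp
    linear_combination (r ^ 2 + d ^ 2 + (r - R₁) ^ 2) * hxy
end

section
/- Fix θ ∈ ℝ, R₁ > 0 and d ∈ ℝ, and for r > R₁ let C(r) be the 2×2 matrix with entries C₁₁ = ((r-R₁)/r)(x²/r²) + (1/(r(r-R₁)))(dx/r - y)², C₂₂ = ((r-R₁)/r)(y²/r²) + (1/(r(r-R₁)))(dy/r + x)², C₁₂ = ((r-R₁)/r)(xy/r²) + (1/(r(r-R₁)))(dx/r - y)(dy/r + x), where x = r cos θ, y = r sin θ. Then the matrix-valued limit lim_{r→R₁⁺} (r - R₁) C(r) exists and equals (1/R₁) q qᵀ, where q = (d cos θ - R₁ sin θ, d sin θ + R₁ cos θ). In particular lim_{r→R₁⁺} (r - R₁)(C₁₁(r) + C₂₂(r)) = (R₁² + d²)/R₁. -/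
open Matrix Filter Topology

/-!
With `x = r cos θ`, `y = r sin θ`, the two brackets of `C(r)` are `u = (cos θ, sin θ)` and
`q(r) = (dx/r - y, dy/r + x) = (d cos θ - r sin θ, d sin θ + r cos θ)`, so that on `r > R₁`
`(r - R₁) C(r) = ((r - R₁)²/r) u uᵀ + (1/r) q(r) q(r)ᵀ`.
The right-hand side is continuous at `r = R₁ > 0`, which gives the limit `(1/R₁) q(R₁) q(R₁)ᵀ`;
its trace is `|q(R₁)|²/R₁ = (R₁² + d²)/R₁`.
-/

lemma Matrix.vecMulVec_fin_two {α : Type*} [Mul α] (a b c e : α) :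
    vecMulVec ![a, b] ![c, e] = !![a * c, a * e; b * c, b * e] := by
  ext i j
  fin_cases i <;> fin_cases j <;> rfl

noncomputable def cloakMatrix (θ R₁ d r : ℝ) : Matrix (Fin 2) (Fin 2) ℝ :=
  let x := r * Real.cos θ
  let y := r * Real.sin θ
  !![(r - R₁) / r * (x ^ 2 / r ^ 2) + 1 / (r * (r - R₁)) * (d * x / r - y) ^ 2,
     (r - R₁) / r * (x * y / r ^ 2) + 1 / (r * (r - R₁)) * ((d * x / r - y) * (d * y / r + x));
     (r - R₁) / r * (x * y / r ^ 2) + 1 / (r * (r - R₁)) * ((d * x / r - y) * (d * y / r + x)),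
     (r - R₁) / r * (y ^ 2 / r ^ 2) + 1 / (r * (r - R₁)) * (d * y / r + x) ^ 2]

noncomputable def rayVector (θ d r : ℝ) : Fin 2 → ℝ :=
  ![d * Real.cos θ - r * Real.sin θ, d * Real.sin θ + r * Real.cos θ]

lemma rayVector_dotProduct_self (θ d r : ℝ) :
    rayVector θ d r ⬝ᵥ rayVector θ d r = r ^ 2 + d ^ 2 := by
  simp only [rayVector, cons_dotProduct_cons, dotProduct_of_isEmpty]
  linear_combination (r ^ 2 + d ^ 2) * Real.sin_sq_add_cos_sq θ

noncomputable def scaledCloakMatrix (θ R₁ d r : ℝ) : Matrix (Fin 2) (Fin 2) ℝ :=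
  ((r - R₁) ^ 2 / r) • vecMulVec ![Real.cos θ, Real.sin θ] ![Real.cos θ, Real.sin θ] +
    r⁻¹ • vecMulVec (rayVector θ d r) (rayVector θ d r)

lemma scaledCloakMatrix_self (θ R₁ d : ℝ) :
    scaledCloakMatrix θ R₁ d R₁ = R₁⁻¹ • vecMulVec (rayVector θ d R₁) (rayVector θ d R₁) := by
  simp [scaledCloakMatrix]

lemma continuousAt_scaledCloakMatrix (θ d : ℝ) {R₁ r : ℝ} (hr : r ≠ 0) :
    ContinuousAt (scaledCloakMatrix θ R₁ d) r := by
  unfold scaledCloakMatrix rayVector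
  fun_prop (disch := exact hr)

lemma smul_cloakMatrix_eq {θ R₁ d r : ℝ} (hr₀ : r ≠ 0) (hr : r ≠ R₁) :
    (r - R₁) • cloakMatrix θ R₁ d r = scaledCloakMatrix θ R₁ d r := by
  have hr₁ : r - R₁ ≠ 0 := sub_ne_zero.mpr hr
  simp only [cloakMatrix, scaledCloakMatrix, rayVector, vecMulVec_fin_two, smul_of]
  ext i j
  fin_cases i <;> fin_cases j <;> simp <;> field_simp

/-- along the ray of polar angle `θ`, the matrix-valued limit
`lim_{r→R₁⁺} (r - R₁) C(r)` exists and equals `(1/R₁) q qᵀ` with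
`q = (d cos θ - R₁ sin θ, d sin θ + R₁ cos θ)`; in particular
`lim_{r→R₁⁺} (r - R₁)(C₁₁(r) + C₂₂(r)) = (R₁² + d²)/R₁`. -/
theorem stmt14 (θ R₁ d : ℝ) (hR₁ : 0 < R₁)
    (C : ℝ → Matrix (Fin 2) (Fin 2) ℝ)
    (hC : ∀ r ∈ Set.Ioi R₁, C r =
      let x := r * Real.cos θ
      let y := r * Real.sin θ
      !![(r - R₁) / r * (x ^ 2 / r ^ 2) + 1 / (r * (r - R₁)) * (d * x / r - y) ^ 2,
         (r - R₁) / r * (x * y / r ^ 2) +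
           1 / (r * (r - R₁)) * ((d * x / r - y) * (d * y / r + x));
         (r - R₁) / r * (x * y / r ^ 2) +
           1 / (r * (r - R₁)) * ((d * x / r - y) * (d * y / r + x)),
         (r - R₁) / r * (y ^ 2 / r ^ 2) + 1 / (r * (r - R₁)) * (d * y / r + x) ^ 2]) :
    Filter.Tendsto (fun r => (r - R₁) • C r) (nhdsWithin R₁ (Set.Ioi R₁))
      (nhds ((1 / R₁) •
        !![(d * Real.cos θ - R₁ * Real.sin θ) ^ 2,
           (d * Real.cos θ - R₁ * Real.sin θ) * (d * Real.sin θ + R₁ * Real.cos θ);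
           (d * Real.cos θ - R₁ * Real.sin θ) * (d * Real.sin θ + R₁ * Real.cos θ),
           (d * Real.sin θ + R₁ * Real.cos θ) ^ 2])) ∧
    Filter.Tendsto (fun r => (r - R₁) * (C r 0 0 + C r 1 1))
      (nhdsWithin R₁ (Set.Ioi R₁)) (nhds ((R₁ ^ 2 + d ^ 2) / R₁)) := by
  have hlim : Tendsto (fun r => (r - R₁) • C r) (𝓝[>] R₁) (𝓝 (scaledCloakMatrix θ R₁ d R₁)) :=
    (continuousAt_scaledCloakMatrix θ d hR₁.ne').continuousWithinAt.tendsto.congr'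
      (eventuallyEq_nhdsWithin_of_eqOn fun r hr =>
        (congrArg _ (hC r hr)).trans (smul_cloakMatrix_eq (hR₁.trans hr).ne' hr.ne')).symm
  constructor
  · convert hlim using 2
    rw [scaledCloakMatrix_self, rayVector, vecMulVec_fin_two, one_div, sq, sq,
      mul_comm (d * Real.sin θ + R₁ * Real.cos θ) (d * Real.cos θ - R₁ * Real.sin θ)]
  · have htrace : trace (scaledCloakMatrix θ R₁ d R₁) = (R₁ ^ 2 + d ^ 2) / R₁ := by
      rw [scaledCloakMatrix_self, trace_smul, trace_vecMulVec, rayVector_dotProduct_self,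
        smul_eq_mul, div_eq_inv_mul]
    refine htrace ▸ ((continuous_id.matrix_trace.tendsto _).comp hlim).congr fun r => ?_
    simp [trace_fin_two, mul_add]
end

section
/- Let κ ∈ ℝ and (x,y) ∈ ℝ² with x² + y² = r² > 0. Define the matrix C = (1/r²) [[r² + 2κxy + κ²y², -κx² - κ²xy + κy²], [-κx² - κ²xy + κy², r² - 2κxy + κ²x²]]. Then C is symmetric, det C = 1, and C₁₁ + C₂₂ = 2 + κ². In particular C is symmetric positive definite. -/
/-!
With `P = !![x, y; y, -x]` we have `Pᵀ * P = r² • 1` on the circle `x² + y² = r²`, so `r⁻¹ • P` is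
an orthogonal reflection, and the rotator matrix factors as `C = Aᵀ * A` with
`A = r⁻¹ • (!![1, κ; 0, 1] * P)`, a shear composed with that reflection. Hence `det A = -1`, so
`det C = (det A)² = 1`, and `C` is positive definite because `A` is invertible.
-/

open Matrix

theorem Matrix.posDef_transpose_mul_self_of_isUnit_det {n : Type*} [Fintype n] [DecidableEq n]
    {A : Matrix n n ℝ} (hA : IsUnit A.det) : (Aᵀ * A).PosDef := by
  simpa only [conjTranspose_eq_transpose_of_trivial] using
    PosDef.conjTranspose_mul_self A (mulVec_injective_of_isUnit ((isUnit_iff_isUnit_det A).mpr hA))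

theorem Matrix.det_transpose_mul_self {n : Type*} [Fintype n] [DecidableEq n] {R : Type*}
    [CommRing R] (A : Matrix n n R) : (Aᵀ * A).det = A.det ^ 2 := by
  rw [det_mul, det_transpose, sq]

section Rotator

variable (κ x y r : ℝ)

noncomputable def rotatorMatrix : Matrix (Fin 2) (Fin 2) ℝ :=
  (r ^ 2)⁻¹ •
    !![r ^ 2 + 2 * κ * x * y + κ ^ 2 * y ^ 2,
       -κ * x ^ 2 - κ ^ 2 * x * y + κ * y ^ 2;
       -κ * x ^ 2 - κ ^ 2 * x * y + κ * y ^ 2,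
       r ^ 2 - 2 * κ * x * y + κ ^ 2 * x ^ 2]

noncomputable def rotatorFactor : Matrix (Fin 2) (Fin 2) ℝ :=
  r⁻¹ • (!![1, κ; 0, 1] * !![x, y; y, -x])

variable {κ x y r}

theorem det_rotatorFactor (hr : r ≠ 0) (hxy : x ^ 2 + y ^ 2 = r ^ 2) :
    (rotatorFactor κ x y r).det = -1 := by
  rw [rotatorFactor, det_smul, det_mul, det_fin_two_of, det_fin_two_of, Fintype.card_fin]
  field_simp
  linear_combination -hxy

theorem rotatorMatrix_eq_transpose_mul_self (hxy : x ^ 2 + y ^ 2 = r ^ 2) :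
    rotatorMatrix κ x y r = (rotatorFactor κ x y r)ᵀ * rotatorFactor κ x y r := by
  rw [rotatorFactor, transpose_smul, smul_mul_smul_comm, ← mul_inv, ← sq, rotatorMatrix, ← hxy,
    mul_fin_two]
  congr 1
  ext i j
  fin_cases i <;> fin_cases j <;>
    simp only [Fin.zero_eta, Fin.mk_one, Fin.isValue, of_apply, cons_val', cons_val_zero,
      cons_val_one, cons_val_fin_one, mul_apply, transpose_apply, Fin.sum_univ_two] <;>
    ring

theorem trace_rotatorMatrix (hr : r ≠ 0) (hxy : x ^ 2 + y ^ 2 = r ^ 2) :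
    (rotatorMatrix κ x y r).trace = 2 + κ ^ 2 := by
  rw [rotatorMatrix, trace_smul, trace_fin_two_of, smul_eq_mul]
  field_simp
  linear_combination κ ^ 2 * hxy

end Rotator

/-- the rotator material matrix is symmetric, has `det C = 1` and
trace `2 + κ²`; in particular it is symmetric positive definite. -/
theorem stmt15 (κ x y r : ℝ) (hr : 0 < r) (hxy : x ^ 2 + y ^ 2 = r ^ 2)
    (C : Matrix (Fin 2) (Fin 2) ℝ)
    (hC : C = (r ^ 2)⁻¹ •
      !![r ^ 2 + 2 * κ * x * y + κ ^ 2 * y ^ 2,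
         -κ * x ^ 2 - κ ^ 2 * x * y + κ * y ^ 2;
         -κ * x ^ 2 - κ ^ 2 * x * y + κ * y ^ 2,
         r ^ 2 - 2 * κ * x * y + κ ^ 2 * x ^ 2]) :
    C.IsSymm ∧ C.det = 1 ∧ C 0 0 + C 1 1 = 2 + κ ^ 2 ∧ C.PosDef := by
  change C = rotatorMatrix κ x y r at hC
  have hdet := det_rotatorFactor (κ := κ) hr.ne' hxy
  have hCA := hC.trans (rotatorMatrix_eq_transpose_mul_self hxy)
  refine ⟨hCA ▸ isSymm_transpose_mul_self _, ?_, ?_, ?_⟩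
  · rw [hCA, det_transpose_mul_self, hdet]
    norm_num
  · rw [← trace_fin_two, hC, trace_rotatorMatrix hr.ne' hxy]
  · rw [hCA]
    exact posDef_transpose_mul_self_of_isUnit_det (by simp [hdet])
end

section
/- Let 0 < ϱ < 1, let R₂ > 0 with 0 < ϱR₂ < r, let d ∈ ℝ, and let (x,y) ∈ ℝ² with x² + y² = r². Define the symmetric matrix C by C₁₁ = ((r-ϱR₂)/r)(x²/r²) + (ϱ/(r-ϱR₂))((ϱ/r)d(x²/r²) - 2xy/r²)d + (r/(r-ϱR₂))(y²/r²), C₂₂ = ((r-ϱR₂)/r)(y²/r²) + (ϱ/(r-ϱR₂))((ϱ/r)d(y²/r²) + 2xy/r²)d + (r/(r-ϱR₂))(x²/r²), C₁₂ = ((r-ϱR₂)/r - r/(r-ϱR₂))(xy/r²) + (ϱ/(r-ϱR₂))(x²/r² + (ϱ/r)d(xy/r²) - y²/r²)d. Then det C = 1 and C₁₁ + C₂₂ = (r - ϱR₂)/r + r/(r - ϱR₂) + ϱ²d²/(r(r - ϱR₂)). -/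
/-!
Writing `a = r - ϱR₂` and `b = ϱd`, one has `C = (det M)⁻¹ • M Mᵀ` with
`M = Q T`, where `Q = !![x, -y; y, x]` is `r` times a rotation and `T = !![a, b; 0, r]`.
This is the transformation-optics form `J Jᵀ / det J` of the material matrix, so `det C = 1`.
Since `Qᵀ Q = r² • 1` and `det M = r² · a r`, the trace of `C` is
`r² · tr (T Tᵀ) / (a r³) = (a² + b² + r²) / (a r)`.
-/

open Matrix

namespace Matrix

variable {K : Type*} [Field K]

theorem det_inv_det_smul_mul_transpose_self (M : Matrix (Fin 2) (Fin 2) K) (hM : M.det ≠ 0) :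
    ((M.det)⁻¹ • (M * Mᵀ)).det = 1 := by
  rw [det_smul, det_mul, det_transpose, Fintype.card_fin]
  field_simp

theorem trace_mul_mul_transpose_of_transpose_mul_self_eq_smul {n : Type*} [Fintype n]
    [DecidableEq n] {Q : Matrix n n K} {c : K} (hQ : Qᵀ * Q = c • 1) (N : Matrix n n K) :
    (Q * N * Qᵀ).trace = c * N.trace := by
  rw [trace_mul_comm, ← Matrix.mul_assoc, hQ, smul_mul, Matrix.one_mul, trace_smul, smul_eq_mul]

end Matrix

section Conformal

variable {R : Type*} [CommRing R]

def conformalMatrix (x y : R) : Matrix (Fin 2) (Fin 2) R :=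
  !![x, -y; y, x]

theorem det_conformalMatrix (x y : R) : (conformalMatrix x y).det = x ^ 2 + y ^ 2 := by
  simp [conformalMatrix, det_fin_two_of]
  ring

theorem conformalMatrix_transpose_mul_self (x y : R) :
    (conformalMatrix x y)ᵀ * conformalMatrix x y = (x ^ 2 + y ^ 2) • 1 := by
  ext i j
  fin_cases i <;> fin_cases j <;> simp [conformalMatrix, mul_apply, Fin.sum_univ_two] <;> ring

end Conformal

theorem stmt16_general (ϱ R₂ r d x y : ℝ)
    (h0 : 0 < ϱ * R₂) (hr : ϱ * R₂ < r) (hxy : x ^ 2 + y ^ 2 = r ^ 2)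
    (C : Matrix (Fin 2) (Fin 2) ℝ)
    (hC : C =
      !![(r - ϱ * R₂) / r * (x ^ 2 / r ^ 2) +
           ϱ / (r - ϱ * R₂) * (ϱ / r * d * (x ^ 2 / r ^ 2) - 2 * x * y / r ^ 2) * d +
           r / (r - ϱ * R₂) * (y ^ 2 / r ^ 2),
         ((r - ϱ * R₂) / r - r / (r - ϱ * R₂)) * (x * y / r ^ 2) +
           ϱ / (r - ϱ * R₂) *
             (x ^ 2 / r ^ 2 + ϱ / r * d * (x * y / r ^ 2) - y ^ 2 / r ^ 2) * d;
         ((r - ϱ * R₂) / r - r / (r - ϱ * R₂)) * (x * y / r ^ 2) +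
           ϱ / (r - ϱ * R₂) *
             (x ^ 2 / r ^ 2 + ϱ / r * d * (x * y / r ^ 2) - y ^ 2 / r ^ 2) * d,
         (r - ϱ * R₂) / r * (y ^ 2 / r ^ 2) +
           ϱ / (r - ϱ * R₂) * (ϱ / r * d * (y ^ 2 / r ^ 2) + 2 * x * y / r ^ 2) * d +
           r / (r - ϱ * R₂) * (x ^ 2 / r ^ 2)]) :
    C.det = 1 ∧
    C 0 0 + C 1 1 =
      (r - ϱ * R₂) / r + r / (r - ϱ * R₂) + ϱ ^ 2 * d ^ 2 / (r * (r - ϱ * R₂)) := by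
  have hr0 : r ≠ 0 := (h0.trans hr).ne'
  have ha : r - ϱ * R₂ ≠ 0 := (sub_pos.mpr hr).ne'
  obtain ⟨T, hT⟩ : ∃ T : Matrix (Fin 2) (Fin 2) ℝ, T = !![r - ϱ * R₂, ϱ * d; 0, r] := ⟨_, rfl⟩
  obtain ⟨M, hM⟩ : ∃ M, M = conformalMatrix x y * T := ⟨_, rfl⟩
  have hdet : M.det = r ^ 2 * ((r - ϱ * R₂) * r) := by
    rw [hM, det_mul, det_conformalMatrix, hxy, hT, det_fin_two_of]
    ring
  have hCM : C = (M.det)⁻¹ • (M * Mᵀ) := by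
    rw [hdet, hC, hM, hT]
    ext i j
    fin_cases i <;> fin_cases j <;>
      simp [conformalMatrix, vecMul, dotProduct] <;> field_simp <;> ring
  refine ⟨hCM ▸ det_inv_det_smul_mul_transpose_self M (hdet ▸ by positivity), ?_⟩
  have htrace : (M * Mᵀ).trace = r ^ 2 * ((r - ϱ * R₂) ^ 2 + (ϱ * d) ^ 2 + r ^ 2) := by
    rw [hM, transpose_mul, ← Matrix.mul_assoc, Matrix.mul_assoc _ T,
      trace_mul_mul_transpose_of_transpose_mul_self_eq_smul
        (conformalMatrix_transpose_mul_self x y), hxy, hT]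
    congr 1
    simp [trace_fin_two, vecMul, dotProduct]
    ring
  rw [← trace_fin_two, hCM, trace_smul, htrace, hdet, smul_eq_mul]
  field_simp
  ring

/-- the concentrator material matrix in the expanded annulus has
`det C = 1` and trace `(r-ϱR₂)/r + r/(r-ϱR₂) + ϱ²d²/(r(r-ϱR₂))`. -/
theorem stmt16 (ϱ R₂ r d x y : ℝ) (hϱ0 : 0 < ϱ) (hϱ1 : ϱ < 1) (hR₂ : 0 < R₂)
    (h0 : 0 < ϱ * R₂) (hr : ϱ * R₂ < r) (hxy : x ^ 2 + y ^ 2 = r ^ 2)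
    (C : Matrix (Fin 2) (Fin 2) ℝ)
    (hC : C =
      !![(r - ϱ * R₂) / r * (x ^ 2 / r ^ 2) +
           ϱ / (r - ϱ * R₂) * (ϱ / r * d * (x ^ 2 / r ^ 2) - 2 * x * y / r ^ 2) * d +
           r / (r - ϱ * R₂) * (y ^ 2 / r ^ 2),
         ((r - ϱ * R₂) / r - r / (r - ϱ * R₂)) * (x * y / r ^ 2) +
           ϱ / (r - ϱ * R₂) *
             (x ^ 2 / r ^ 2 + ϱ / r * d * (x * y / r ^ 2) - y ^ 2 / r ^ 2) * d;
         ((r - ϱ * R₂) / r - r / (r - ϱ * R₂)) * (x * y / r ^ 2) +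
           ϱ / (r - ϱ * R₂) *
             (x ^ 2 / r ^ 2 + ϱ / r * d * (x * y / r ^ 2) - y ^ 2 / r ^ 2) * d,
         (r - ϱ * R₂) / r * (y ^ 2 / r ^ 2) +
           ϱ / (r - ϱ * R₂) * (ϱ / r * d * (y ^ 2 / r ^ 2) + 2 * x * y / r ^ 2) * d +
           r / (r - ϱ * R₂) * (x ^ 2 / r ^ 2)]) :
    C.det = 1 ∧
    C 0 0 + C 1 1 =
      (r - ϱ * R₂) / r + r / (r - ϱ * R₂) + ϱ ^ 2 * d ^ 2 / (r * (r - ϱ * R₂)) :=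
  stmt16_general ϱ R₂ r d x y h0 hr hxy C hC
end
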